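/- arXiv:math/9204219 — 4 statements merged into one kernel-verified Lean document; each statement's English description precedes it below -/
import Mathlib

section
/- There exists a bijection θ : ℕ × (finite sequences of countable ordinals) → ω₁ such that (i) for every limit ordinal δ < ω₁, θ maps ℕ × (finite sequences of ordinals below δ) onto δ, and (ii) for all k ∈ ℕ and finite sequences s, t of countable ordinals, if t properly extends s then θ(k, s) < θ(k, t). -/
open Ordinal Set

noncomputable def omega1 : Ordinal := (Cardinal.aleph 1).ord

/-- The type of countable ordinals. -/
abbrev O1 : Type _ := ↥(Set.Iio omega1)

/-!
Every countable ordinal is uniquely `ω * q + n` with `q < ω₁` and `n : ℕ`. Put `(k, s)` into the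
block `q = (sup s) / ω`; since a limit ordinal `δ` is a multiple of `ω`, `ω * q + n < δ` holds
exactly when `sup s < δ`, which gives (i) whatever numbering is used inside the blocks. Each block
is countably infinite, and "same `k`, proper prefix" is a strict order on it in which every element
has finitely many predecessors. Such an order admits a bijection with `ℕ` that is strictly
monotone: code the finite set formed by `x` and its predecessors as a natural number so that strict
inclusion increases the code, and enumerate the codes in increasing order. This gives (ii).
-/

section StrictOrder

variable {α : Type*} {r : α → α → Prop} [IsStrictOrder α r]

theorem insert_setOf_rel_ssubset {x y : α} (hxy : r x y) :
    insert x {z | r z x} ⊂ insert y {z | r z y} := by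
  refine (ssubset_iff_of_subset ?_).2 ⟨y, mem_insert y _, ?_⟩
  · rintro z (rfl | hzx)
    exacts [Or.inr hxy, Or.inr (_root_.trans hzx hxy)]
  · rintro (rfl | hyx)
    exacts [irrefl _ hxy, irrefl _ (_root_.trans hxy hyx)]

theorem insert_setOf_rel_injective : Function.Injective fun x : α => insert x {z | r z x} := by
  intro x y (h : insert x _ = insert y _)
  have hx : x ∈ insert y {z | r z y} := h ▸ mem_insert x _
  have hy : y ∈ insert x {z | r z x} := h ▸ mem_insert y _
  rcases hx with rfl | hxy
  · rfl
  rcases hy with rfl | hyx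
  · rfl
  exact (irrefl _ (_root_.trans hxy hyx)).elim

variable (r)

theorem exists_equiv_nat_strictMono_of_finite_predecessors [Countable α] [Infinite α]
    (hfin : ∀ x, {y | r y x}.Finite) :
    ∃ f : α ≃ ℕ, ∀ ⦃x y⦄, r x y → f x < f y := by
  obtain ⟨e, he⟩ := Countable.exists_injective_nat α
  -- The colex order on `Finset ℕ` extends strict inclusion and has order type `ω`.
  let code : α → ℕ := fun x =>
    Finset.orderIsoColex.symm (toColex (((hfin x).insert x).toFinset.map ⟨e, he⟩))
  have hcode_inj : Function.Injective code := by
    intro x y h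
    apply insert_setOf_rel_injective (r := r)
    simpa [code, Finset.map_inj] using h
  have hcode_lt : ∀ ⦃x y⦄, r x y → code x < code y := fun x y hxy =>
    Finset.orderIsoColex.symm.strictMono <| Finset.Colex.toColex_lt_toColex_of_ssubset <|
      Finset.map_ssubset_map.2 <| Finite.toFinset_ssubset_toFinset.2 <|
        insert_setOf_rel_ssubset hxy
  have : Infinite (range code) := (infinite_range_of_injective hcode_inj).to_subtype
  exact ⟨(Equiv.ofInjective code hcode_inj).trans (Nat.Subtype.orderIsoOfNat _).symm.toEquiv,
    fun x y hxy => (Nat.Subtype.orderIsoOfNat _).symm.strictMono (hcode_lt hxy)⟩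

theorem exists_bijective_prod_nat_of_fibers {β : Type*} (g : α → β)
    (hcount : ∀ b, (g ⁻¹' {b}).Countable) (hinf : ∀ b, (g ⁻¹' {b}).Infinite)
    (hfin : ∀ x, {y | r y x}.Finite) :
    ∃ N : α → ℕ, Function.Bijective (fun x => (g x, N x)) ∧
      ∀ ⦃x y⦄, g x = g y → r x y → N x < N y := by
  have hfiber (b : β) :
      ∃ f : g ⁻¹' {b} ≃ ℕ, ∀ ⦃x y⦄, Subrel r (· ∈ g ⁻¹' {b}) x y → f x < f y :=
    have := (hcount b).to_subtype
    have := (hinf b).to_subtype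
    exists_equiv_nat_strictMono_of_finite_predecessors _ fun x =>
      (hfin x).preimage Subtype.val_injective.injOn
  choose f hf using hfiber
  let N : α → ℕ := fun x => f (g x) ⟨x, rfl⟩
  have hN {b : β} {x : α} (hx : x ∈ g ⁻¹' {b}) : f b ⟨x, hx⟩ = N x := by
    obtain rfl : g x = b := hx
    rfl
  refine ⟨N, ⟨fun x y hxy => ?_, fun ⟨b, n⟩ => ?_⟩, fun x y hg hxy => ?_⟩
  · obtain ⟨hg, hNxy⟩ := Prod.ext_iff.1 hxy
    exact congrArg Subtype.val ((f (g x)).injective (hNxy.trans (hN (x := y) hg.symm).symm))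
  · exact ⟨((f b).symm n).1, Prod.ext ((f b).symm n).2
      ((hN _).symm.trans ((f b).apply_symm_apply n))⟩
  · calc N x = f (g y) ⟨x, hg⟩ := (hN hg).symm
      _ < f (g y) ⟨y, rfl⟩ := hf (g y) hxy

end StrictOrder

theorem omega1_eq_omega_one : omega1 = ω₁ := Cardinal.ord_aleph 1

theorem countable_Iio_of_lt_omega1 {o : Ordinal} (ho : o < omega1) : (Iio o).Countable := by
  rwa [← Cardinal.le_aleph0_iff_set_countable, Cardinal.mk_Iio_ordinal, Cardinal.lift_le_aleph0,
    Cardinal.card_le_iff, Cardinal.succ_aleph0]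

theorem omega0_mul_add_natCast_lt_omega1 {q : Ordinal} (hq : q < omega1) (n : ℕ) :
    ω * q + n < omega1 := by
  rw [omega1_eq_omega_one] at hq ⊢
  exact isPrincipal_add_omega 1 (isPrincipal_mul_omega 1 omega0_lt_omega_one hq)
    ((natCast_lt_omega0 n).trans omega0_lt_omega_one)

theorem omega0_mul_succ_lt_omega1 {q : Ordinal} (hq : q < omega1) :
    ω * Order.succ q < omega1 := by
  rw [omega1_eq_omega_one] at hq ⊢
  exact isPrincipal_mul_omega 1 omega0_lt_omega_one ((Cardinal.isSuccLimit_omega 1).succ_lt hq)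

theorem div_omega0_le_self (a : Ordinal) : a / ω ≤ a :=
  div_le_of_le_mul (le_mul_right a omega0_pos)

theorem omega0_mul_add_natCast_div (a : Ordinal) (n : ℕ) : (ω * a + n) / ω = a := by
  rw [mul_add_div _ omega0_ne_zero, div_eq_zero_of_lt (natCast_lt_omega0 n), add_zero]

theorem omega0_mul_add_natCast_mod (a : Ordinal) (n : ℕ) : (ω * a + n) % ω = n := by
  rw [mul_add_mod_self, mod_eq_of_lt (natCast_lt_omega0 n)]

theorem omega0_mul_add_natCast_injective :
    Function.Injective fun p : Ordinal × ℕ => ω * p.1 + p.2 := by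
  rintro ⟨a, m⟩ ⟨b, n⟩ (h : ω * a + m = ω * b + n)
  have hdiv := congrArg (· / ω) h
  have hmod := congrArg (· % ω) h
  simp only [omega0_mul_add_natCast_div, omega0_mul_add_natCast_mod, Nat.cast_inj] at hdiv hmod
  rw [hdiv, hmod]

theorem exists_omega0_mul_div_add_natCast_eq (a : Ordinal) : ∃ n : ℕ, ω * (a / ω) + n = a := by
  obtain ⟨n, hn⟩ := lt_omega0.1 (mod_lt a omega0_ne_zero)
  exact ⟨n, hn ▸ div_add_mod a ω⟩

theorem omega0_mul_add_natCast_lt_omega0_mul {a b : Ordinal} (hab : a < b) (n : ℕ) :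
    ω * a + n < ω * b :=
  calc ω * a + n < ω * a + ω := add_lt_add_right (natCast_lt_omega0 n) _
    _ = ω * Order.succ a := (mul_succ _ _).symm
    _ ≤ ω * b := mul_le_mul_right (Order.succ_le_of_lt hab) _

theorem omega0_mul_div_add_natCast_lt_iff {δ : Ordinal} (hδ : ω ∣ δ) (m : Ordinal) (n : ℕ) :
    ω * (m / ω) + n < δ ↔ m < δ := by
  obtain ⟨d, rfl⟩ := hδ
  calc ω * (m / ω) + n < ω * d ↔ m / ω < d :=
        ⟨fun h => (mul_lt_mul_iff_right₀ omega0_pos).1 (le_self_add.trans_lt h),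
          fun h => omega0_mul_add_natCast_lt_omega0_mul h n⟩
    _ ↔ m < ω * d := (lt_mul_iff_div_lt omega0_ne_zero).symm

noncomputable def omega0MulAddNat (p : O1 × ℕ) : O1 :=
  ⟨ω * p.1 + p.2, omega0_mul_add_natCast_lt_omega1 p.1.2 p.2⟩

theorem omega0MulAddNat_bijective : Function.Bijective omega0MulAddNat := by
  refine ⟨fun p p' h => ?_, fun a => ?_⟩
  · have := omega0_mul_add_natCast_injective (a₁ := (p.1, p.2)) (a₂ := (p'.1, p'.2))
      (congrArg Subtype.val h)
    exact Prod.ext (Subtype.ext (Prod.ext_iff.1 this).1) (Prod.ext_iff.1 this).2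
  · have hq : a.1 / ω < omega1 := (div_omega0_le_self a.1).trans_lt a.2
    obtain ⟨n, hn⟩ := exists_omega0_mul_div_add_natCast_eq a.1
    exact ⟨(⟨a.1 / ω, hq⟩, n), Subtype.ext hn⟩

section Prefix

variable {ι β : Type*}

def SameIndexProperPrefix (x y : ι × List β) : Prop :=
  x.1 = y.1 ∧ x.2 <+: y.2 ∧ x.2 ≠ y.2

instance : IsStrictOrder (ι × List β) SameIndexProperPrefix where
  irrefl _ h := h.2.2 rfl
  trans _ _ _ hxy hyz := ⟨hxy.1.trans hyz.1, hxy.2.1.trans hyz.2.1, fun h =>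
    hxy.2.2 (hxy.2.1.eq_of_length (hxy.2.1.length_le.antisymm (h ▸ hyz.2.1.length_le)))⟩

theorem finite_setOf_sameIndexProperPrefix (x : ι × List β) :
    {y | SameIndexProperPrefix y x}.Finite :=
  ((finite_singleton x.1).prod x.2.inits.finite_toSet).subset fun _ hy =>
    ⟨hy.1, (List.mem_inits _ _).2 hy.2.1⟩

end Prefix

noncomputable def entrySup (s : List O1) : Ordinal := s.toFinset.sup Subtype.val

theorem entrySup_lt_iff {s : List O1} {δ : Ordinal} (hδ : 0 < δ) :
    entrySup s < δ ↔ ∀ x ∈ s, (x : Ordinal) < δ := by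
  simp [entrySup, Finset.sup_lt_iff hδ]

theorem le_entrySup {s : List O1} {x : O1} (hx : x ∈ s) : (x : Ordinal) ≤ entrySup s :=
  Finset.le_sup (f := Subtype.val) (List.mem_toFinset.2 hx)

theorem entrySup_mono {s t : List O1} (h : s ⊆ t) : entrySup s ≤ entrySup t :=
  Finset.sup_mono fun _ hx => List.mem_toFinset.2 (h (List.mem_toFinset.1 hx))

theorem entrySup_lt_omega1 (s : List O1) : entrySup s < omega1 :=
  (entrySup_lt_iff (omega1_eq_omega_one ▸ omega_pos 1)).2 fun x _ => x.2

theorem entrySup_singleton (x : O1) : entrySup [x] = x := by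
  simp [entrySup]

noncomputable def blockIndex (s : List O1) : O1 :=
  ⟨entrySup s / ω, (div_omega0_le_self _).trans_lt (entrySup_lt_omega1 s)⟩

theorem blockIndex_mono {s t : List O1} (h : s ⊆ t) : blockIndex s ≤ blockIndex t :=
  div_le_left (entrySup_mono h) _

theorem countable_blockIndex_fiber (q : O1) :
    ((fun x : ℕ × List O1 => blockIndex x.2) ⁻¹' {q}).Countable := by
  let B : Set O1 := Subtype.val ⁻¹' Iio (ω * Order.succ q.1)
  have : Countable B := ((countable_Iio_of_lt_omega1 (omega0_mul_succ_lt_omega1 q.2)).preimage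
    Subtype.val_injective).to_subtype
  refine (countable_univ.prod (countable_range (List.map ((↑) : B → O1)))).mono ?_
  rintro ⟨k, s⟩ (hs : blockIndex s = q)
  refine ⟨mem_univ k, ?_⟩
  rw [range_list_map_coe]
  intro x hx
  show x.1 < ω * Order.succ q.1
  rw [← hs]
  exact (le_entrySup hx).trans_lt (lt_mul_succ_div _ omega0_ne_zero)

theorem infinite_blockIndex_fiber (q : O1) :
    ((fun x : ℕ × List O1 => blockIndex x.2) ⁻¹' {q}).Infinite := by
  have hq : ω * q.1 < omega1 := by simpa using omega0_mul_add_natCast_lt_omega1 q.2 0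
  refine infinite_of_injective_forall_mem (f := fun n : ℕ => (n, [(⟨ω * q.1, hq⟩ : O1)]))
    (fun m n h => (Prod.ext_iff.1 h).1) fun n => Subtype.ext ?_
  simp [blockIndex, entrySup_singleton, mul_div_cancel _ omega0_ne_zero]

/-- There is a bijection `θ : ℕ × (ω₁)^{<ω} → ω₁` such that (i) for every countable limit
ordinal `δ`, `θ` maps `ℕ × δ^{<ω}` onto `δ` (i.e. `θ(k, s) < δ` iff every entry of `s` is
below `δ`), and (ii) if `t` properly extends `s` then `θ(k, s) < θ(k, t)`. -/
theorem stmt1 :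
    ∃ θ : ℕ × List O1 ≃ O1,
      (∀ δ : Ordinal, δ < omega1 → Order.IsSuccLimit δ →
        ∀ (k : ℕ) (s : List O1),
          ((θ (k, s) : O1) : Ordinal) < δ ↔ ∀ x ∈ s, ((x : O1) : Ordinal) < δ) ∧
      (∀ (k : ℕ) (s t : List O1), s <+: t → s ≠ t →
        ((θ (k, s) : O1) : Ordinal) < ((θ (k, t) : O1) : Ordinal)) := by
  obtain ⟨N, hbij, hN⟩ := exists_bijective_prod_nat_of_fibers SameIndexProperPrefix
    (fun x : ℕ × List O1 => blockIndex x.2) countable_blockIndex_fiber infinite_blockIndex_fiber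
    finite_setOf_sameIndexProperPrefix
  refine ⟨Equiv.ofBijective _ (omega0MulAddNat_bijective.comp hbij), fun δ _ hδ k s => ?_,
    fun k s t hst hne => ?_⟩
  · exact (omega0_mul_div_add_natCast_lt_iff
      (isSuccPrelimit_iff_omega0_dvd.1 hδ.isSuccPrelimit) _ _).trans (entrySup_lt_iff hδ.bot_lt)
  · show ω * (blockIndex s : Ordinal) + N (k, s) < ω * (blockIndex t : Ordinal) + N (k, t)
    rcases (blockIndex_mono hst.subset).lt_or_eq with hlt | heq
    · exact (omega0_mul_add_natCast_lt_omega0_mul hlt _).trans_le le_self_add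
    · rw [heq]
      exact add_lt_add_right
        (Nat.cast_lt.2 (hN (x := (k, s)) (y := (k, t)) heq ⟨rfl, hst, hne⟩)) _
end

section
/- If a ladder system ⟨ζ_δ : δ ∈ lim(ω₁)⟩ on the limit ordinals satisfies 3-uniformization, then there is a ladder system ⟨ζ'_α : α ∈ [ω, ω₁)⟩ on all of [ω, ω₁) which satisfies 3-uniformization, obtained by setting ζ'_{δ+n} = ζ_δ ∘ θ_n where ω is partitioned into infinitely many infinite sets Y_n and θ_n : ω → Y_n enumerates Y_n in increasing order. -/
open Ordinal Set

def IsLadderOn (δ : Ordinal) (η : ℕ → Ordinal) : Prop :=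
  StrictMono η ∧ (∀ n, η n < δ) ∧ ∀ β < δ, ∃ n, β ≤ η n

def IsLadderAt (α : Ordinal) (η : ℕ → Ordinal) : Prop :=
  ∃ (δ : Ordinal) (n : ℕ), Order.IsSuccLimit δ ∧ α = δ + n ∧ IsLadderOn δ η

def IsClub' (C : Set Ordinal) : Prop :=
  C ⊆ Set.Iio omega1 ∧
  (∀ α < omega1, ∃ β ∈ C, α < β) ∧
  (∀ δ < omega1, Order.IsSuccLimit δ → (∀ α < δ, ∃ β ∈ C, α < β ∧ β < δ) → δ ∈ C)

def IsStat (S : Set Ordinal) : Prop := ∀ C, IsClub' C → (S ∩ C).Nonempty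

def UnifBelow (S : Set Ordinal) (η : Ordinal → ℕ → Ordinal) (h : Ordinal → ℕ → ℕ) : Prop :=
  ∀ c : Ordinal → ℕ → ℕ, (∀ α ∈ S, ∀ n, c α n < h α n) →
    ∃ (f : Ordinal → ℕ) (fs : Ordinal → ℕ), ∀ α ∈ S, ∀ n, fs α ≤ n → f (η α n) = c α n

def LambdaUnif (S : Set Ordinal) (η : Ordinal → ℕ → Ordinal) (l : ℕ) : Prop :=
  UnifBelow S η (fun _ _ => l)

def OmegaUnif (S : Set Ordinal) (η : Ordinal → ℕ → Ordinal) : Prop :=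
  ∀ c : Ordinal → ℕ → ℕ,
    ∃ (f : Ordinal → ℕ) (fs : Ordinal → ℕ), ∀ α ∈ S, ∀ n, fs α ≤ n → f (η α n) = c α n

def TreeLike (S : Set Ordinal) (η : Ordinal → ℕ → Ordinal) : Prop :=
  ∀ α ∈ S, ∀ β ∈ S, ∀ n m, η α n = η β m → n = m ∧ ∀ k ≤ n, η α k = η β k

def StronglyTreeLike (S : Set Ordinal) (η : Ordinal → ℕ → Ordinal) (F : Ordinal → ℕ) : Prop :=
  TreeLike S η ∧ ∀ α ∈ S, ∀ β ∈ S, ∀ n m, η α n = η β m → F α = F β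

/-!
Write `α ∈ [ω, ω₁)` as `δ + j` with `δ` limit and put `ζ'_{δ+j} = ζ_δ ∘ Nat.pair j`, so the
ladders at `δ, δ + 1, …` use the disjoint pieces `{Nat.pair j k | k}` of `ζ_δ`. A coloring
`⟨c_α⟩` of the new system is then coded by the coloring `c'_δ (Nat.pair j k) = c_{δ+j} k` of the
old one, and a uniformization of `c'` uniformizes `c` because `k ≤ Nat.pair j k`.

The hypothesis and the conclusion live in different universes; the old system is first carried
over along the order isomorphism between the countable ordinals of the two universes.
-/

universe u v

noncomputable def limPart (α : Ordinal) : Ordinal := ω * (α / ω)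

noncomputable def natPart (α : Ordinal) : ℕ :=
  Classical.choose (lt_omega0.mp (mod_lt α omega0_ne_zero))

theorem limPart_add_natPart (α : Ordinal) : limPart α + natPart α = α := by
  rw [limPart, natPart, ← Classical.choose_spec (lt_omega0.mp (mod_lt α omega0_ne_zero)),
    div_add_mod]

theorem limPart_le (α : Ordinal) : limPart α ≤ α :=
  le_self_add.trans_eq (limPart_add_natPart α)

theorem isSuccLimit_limPart {α : Ordinal} (hα : ω ≤ α) : Order.IsSuccLimit (limPart α) := by
  have h1 : 1 ≤ α / ω := (mul_le_iff_le_div omega0_ne_zero).1 (by rwa [mul_one])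
  have hω : ω ≤ limPart α := (mul_one ω).symm.trans_le (by unfold limPart; gcongr)
  exact isSuccLimit_iff.2
    ⟨(omega0_pos.trans_le hω).ne', isSuccPrelimit_iff_omega0_dvd.2 ⟨_, rfl⟩⟩

theorem IsLadderOn.comp_strictMono {δ : Ordinal} {η : ℕ → Ordinal} (h : IsLadderOn δ η)
    {θ : ℕ → ℕ} (hθ : StrictMono θ) : IsLadderOn δ (η ∘ θ) :=
  ⟨h.1.comp hθ, fun _ => h.2.1 _,
    fun β hβ => (h.2.2 β hβ).imp fun n hn => hn.trans (h.1.monotone (hθ.id_le n))⟩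

noncomputable def spreadLadder (ζ : Ordinal.{u} → ℕ → Ordinal.{v}) (α : Ordinal.{u}) :
    ℕ → Ordinal.{v} :=
  ζ (limPart α) ∘ Nat.pair (natPart α)

theorem isLadderAt_spreadLadder {ζ : Ordinal → ℕ → Ordinal} {α : Ordinal} (hα : ω ≤ α)
    (h : IsLadderOn (limPart α) (ζ (limPart α))) : IsLadderAt α (spreadLadder ζ α) :=
  ⟨limPart α, natPart α, isSuccLimit_limPart hα, (limPart_add_natPart α).symm,
    h.comp_strictMono fun _ _ => Nat.pair_lt_pair_right _⟩

theorem LambdaUnif.spread {S T : Set Ordinal.{u}} {ζ : Ordinal.{u} → ℕ → Ordinal.{v}}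
    {l : ℕ} (hT : ∀ α ∈ T, limPart α ∈ S) (hS : ∀ δ ∈ S, ∀ j : ℕ, δ + j ∈ T)
    (h : LambdaUnif S ζ l) : LambdaUnif T (spreadLadder ζ) l := by
  intro c hc
  obtain ⟨f, fs, hf⟩ := h (fun δ m => c (δ + (Nat.unpair m).1) (Nat.unpair m).2)
    fun δ hδ m => hc _ (hS δ hδ _) _
  refine ⟨f, fs ∘ limPart, fun α hα n hn => ?_⟩
  simpa only [spreadLadder, Function.comp_apply, Nat.unpair_pair, limPart_add_natPart] using
    hf _ (hT α hα) (Nat.pair (natPart α) n) (hn.trans (Nat.right_le_pair _ _))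

theorem lift_omega1 : lift.{v} omega1.{u} = omega1.{max u v} := by
  rw [omega1, Cardinal.lift_ord, Cardinal.lift_aleph, lift_one, omega1]

noncomputable def transferUniv (α : Ordinal.{u}) : Ordinal.{v} :=
  Function.invFun lift.{u, v} (lift.{v, u} α)

section transferUniv

variable {α β : Ordinal.{u}}

theorem lift_transferUniv (h : α < omega1) :
    lift.{u} (transferUniv.{u, v} α) = lift.{v} α :=
  Function.invFun_eq (mem_range_lift_of_le
    ((lift_lt.2 h).trans_eq (lift_omega1.trans lift_omega1.symm)).le)

theorem transferUniv_lt_omega1 (h : α < omega1) : transferUniv.{u, v} α < omega1 := by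
  rw [← lift_lt.{u}, lift_transferUniv h, lift_omega1, ← lift_omega1.{u, v}, lift_lt]
  exact h

theorem transferUniv_transferUniv (h : α < omega1) :
    transferUniv.{v, u} (transferUniv.{u, v} α) = α :=
  lift_inj.{v, u}.1
    ((lift_transferUniv.{v, u} (transferUniv_lt_omega1 h)).trans (lift_transferUniv h))

theorem transferUniv_lt_transferUniv (hα : α < omega1) (hβ : β < omega1) :
    transferUniv.{u, v} α < transferUniv β ↔ α < β := by
  rw [← lift_lt.{u}, lift_transferUniv hα, lift_transferUniv hβ, lift_lt]

theorem transferUniv_le_transferUniv (hα : α < omega1) (hβ : β < omega1) :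
    transferUniv.{u, v} α ≤ transferUniv β ↔ α ≤ β := by
  simpa only [not_lt] using (transferUniv_lt_transferUniv hβ hα).not

theorem isSuccLimit_transferUniv (h : α < omega1) :
    Order.IsSuccLimit (transferUniv.{u, v} α) ↔ Order.IsSuccLimit α := by
  rw [← isSuccLimit_lift.{u, v} (o := transferUniv.{u, v} α), lift_transferUniv h,
    isSuccLimit_lift]

theorem le_transferUniv_iff {γ : Ordinal.{v}} (hγ : γ < omega1) (hα : α < omega1) :
    γ ≤ transferUniv.{u, v} α ↔ transferUniv γ ≤ α := by
  conv_lhs => rw [← transferUniv_transferUniv hγ]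
  exact transferUniv_le_transferUniv (transferUniv_lt_omega1 hγ) hα

theorem lt_transferUniv_iff {γ : Ordinal.{v}} (hγ : γ < omega1) (hα : α < omega1) :
    γ < transferUniv.{u, v} α ↔ transferUniv γ < α := by
  conv_lhs => rw [← transferUniv_transferUniv hγ]
  exact transferUniv_lt_transferUniv (transferUniv_lt_omega1 hγ) hα

end transferUniv

abbrev countableLimits : Set Ordinal := {δ | δ < omega1 ∧ Order.IsSuccLimit δ}

theorem transferUniv_mem_countableLimits {α : Ordinal.{u}} (h : α ∈ countableLimits) :
    transferUniv.{u, v} α ∈ countableLimits :=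
  ⟨transferUniv_lt_omega1 h.1, (isSuccLimit_transferUniv h.1).2 h.2⟩

theorem IsLadderOn.map_transferUniv {δ : Ordinal.{u}} {η : ℕ → Ordinal.{u}} (hδ : δ < omega1)
    (h : IsLadderOn δ η) : IsLadderOn (transferUniv.{u, v} δ) (transferUniv ∘ η) := by
  obtain ⟨hmono, hlt, hcof⟩ := h
  have hη : ∀ n, η n < omega1 := fun n => (hlt n).trans hδ
  refine ⟨fun m n hmn => (transferUniv_lt_transferUniv (hη m) (hη n)).2 (hmono hmn),
    fun n => (transferUniv_lt_transferUniv (hη n) hδ).2 (hlt n), fun γ hγ => ?_⟩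
  have hγ₁ : γ < omega1 := hγ.trans (transferUniv_lt_omega1 hδ)
  obtain ⟨n, hn⟩ := hcof _ ((lt_transferUniv_iff hγ₁ hδ).1 hγ)
  exact ⟨n, (le_transferUniv_iff hγ₁ (hη n)).2 hn⟩

noncomputable def transferLadders (ζ : Ordinal.{u} → ℕ → Ordinal.{u}) :
    Ordinal.{v} → ℕ → Ordinal.{v} :=
  fun δ => transferUniv ∘ ζ (transferUniv δ)

theorem isLadderOn_transferLadders {ζ : Ordinal.{u} → ℕ → Ordinal.{u}}
    (hζ : ∀ δ, δ < omega1 → Order.IsSuccLimit δ → IsLadderOn δ (ζ δ)) {δ : Ordinal.{v}}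
    (hδ : δ ∈ countableLimits) : IsLadderOn δ (transferLadders ζ δ) := by
  have hδ' := transferUniv_mem_countableLimits.{v, u} hδ
  show IsLadderOn δ (transferUniv ∘ ζ (transferUniv δ))
  simpa only [transferUniv_transferUniv hδ.1] using
    (hζ _ hδ'.1 hδ'.2).map_transferUniv.{u, v} hδ'.1

theorem LambdaUnif.transfer {ζ : Ordinal.{u} → ℕ → Ordinal.{u}} {l : ℕ}
    (hζ : ∀ δ ∈ countableLimits, ∀ n, ζ δ n < omega1) (h : LambdaUnif countableLimits ζ l) :
    LambdaUnif countableLimits (transferLadders.{u, v} ζ) l := by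
  intro c hc
  obtain ⟨f, fs, hf⟩ := h (fun α => c (transferUniv α))
    fun α hα => hc _ (transferUniv_mem_countableLimits hα)
  refine ⟨f ∘ transferUniv, fs ∘ transferUniv, fun δ hδ n hn => ?_⟩
  have hδ' := transferUniv_mem_countableLimits.{v, u} hδ
  simp only [Function.comp, transferLadders, transferUniv_transferUniv (hζ _ hδ' n)]
  rw [hf _ hδ' n hn, transferUniv_transferUniv hδ.1]

theorem limPart_mem_countableLimits {α : Ordinal} (hα : α ∈ Ico ω omega1) :
    limPart α ∈ countableLimits :=
  ⟨(limPart_le α).trans_lt hα.2, isSuccLimit_limPart hα.1⟩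

theorem add_natCast_mem_Ico {δ : Ordinal} (hδ : δ ∈ countableLimits) (j : ℕ) :
    δ + j ∈ Ico ω omega1 :=
  ⟨(omega0_le_of_isSuccLimit hδ.2).trans le_self_add,
    isPrincipal_add_ord (Cardinal.aleph0_le_aleph 1) hδ.1
      (natCast_lt_of_isSuccLimit (Cardinal.isSuccLimit_ord (Cardinal.aleph0_le_aleph 1)) j)⟩

/-- If a ladder system on the countable limit ordinals satisfies 3-uniformization, then
there is a ladder system on all of `[ω, ω₁)` which satisfies 3-uniformization. -/
theorem stmt7 (ζ : Ordinal → ℕ → Ordinal)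
    (hζ : ∀ δ, δ < omega1 → Order.IsSuccLimit δ → IsLadderOn δ (ζ δ))
    (hunif : LambdaUnif {δ | δ < omega1 ∧ Order.IsSuccLimit δ} ζ 3) :
    ∃ ζ' : Ordinal → ℕ → Ordinal,
      (∀ α ∈ Set.Ico (Ordinal.omega0) omega1, IsLadderAt α (ζ' α)) ∧
      LambdaUnif (Set.Ico (Ordinal.omega0) omega1) ζ' 3 := by
  have hζω₁ : ∀ δ ∈ countableLimits, ∀ n, ζ δ n < omega1 :=
    fun δ hδ n => ((hζ δ hδ.1 hδ.2).2.1 n).trans hδ.1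
  exact ⟨spreadLadder (transferLadders ζ),
    fun α hα => isLadderAt_spreadLadder hα.1
      (isLadderOn_transferLadders hζ (limPart_mem_countableLimits hα)),
    (hunif.transfer hζω₁).spread (fun _ => limPart_mem_countableLimits)
      fun _ => add_natCast_mem_Ico⟩
end

section
/- Suppose f : ω₁ → λ uniformizes a coloring c of a tree-like ladder system η on S with minimal f*, i.e., f*(α) is the least k such that f(η_α(n)) = c_α(n) for all n ≥ k. If there exists n ≥ max(f*(α), f*(β)) with η_α(n) = η_β(n) and c_α ↾ [n, ω) and c_β ↾ [n, ω) satisfy c_α(m) = c_β(m) whenever η_α(m) = η_β(m) for m ≥ n, and moreover c_α(n) determines c_α ↾ n (i.e., the coloring is injectively coded so that c_α(n) = c_β(n) implies c_α ↾ n = c_β ↾ n), then f*(α) = f*(β). -/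
/-!
Below `n` the two ladders and the two colorings agree (tree-likeness for the ladders, the
injective coding applied to `c_α(n) = c_β(n)` for the colorings), and from `n` on both are
uniformized because `n ≥ max(f*(α), f*(β))`. So `f` uniformizes `c_β` along `η_β` from
`f*(α)` on, and minimality gives `f*(β) ≤ f*(α)`; the symmetric argument gives the converse.
-/

open Ordinal Set

section UniformizesFrom

variable {X Y : Type*}

def UniformizesFrom (f : X → Y) (e : ℕ → X) (d : ℕ → Y) (k : ℕ) : Prop :=
  ∀ m, k ≤ m → f (e m) = d m

theorem UniformizesFrom.mono {f : X → Y} {e : ℕ → X} {d : ℕ → Y} {k k' : ℕ}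
    (h : UniformizesFrom f e d k) (hkk' : k ≤ k') : UniformizesFrom f e d k' :=
  fun m hm => h m (hkk'.trans hm)

theorem UniformizesFrom.of_eq_below {f : X → Y} {e e' : ℕ → X} {d d' : ℕ → Y}
    {k n : ℕ} (hk : UniformizesFrom f e d k) (hn : UniformizesFrom f e' d' n)
    (he : ∀ m < n, e m = e' m) (hd : ∀ m < n, d m = d' m) :
    UniformizesFrom f e' d' k := by
  intro m hkm
  rcases lt_or_ge m n with hmn | hnm
  · rw [← he m hmn, ← hd m hmn]
    exact hk m hkm
  · exact hn m hnm

end UniformizesFrom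

theorem stmt11_general (S : Set Ordinal) (η : Ordinal → ℕ → Ordinal)
    (htree : TreeLike S η)
    (c : Ordinal → ℕ → ℕ) (f : Ordinal → ℕ) (fs : Ordinal → ℕ)
    (hunif : ∀ α ∈ S, ∀ n, fs α ≤ n → f (η α n) = c α n)
    (hmin : ∀ α ∈ S, ∀ k, (∀ n, k ≤ n → f (η α n) = c α n) → fs α ≤ k)
    (α β : Ordinal) (hα : α ∈ S) (hβ : β ∈ S)
    (n : ℕ) (hn : max (fs α) (fs β) ≤ n) (heq : η α n = η β n)
    (hcompat : ∀ m, n ≤ m → η α m = η β m → c α m = c β m)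
    (hcode : ∀ γ ∈ S, ∀ γ' ∈ S, ∀ j, c γ j = c γ' j → ∀ i < j, c γ i = c γ' i) :
    fs α = fs β := by
  have hη : ∀ m < n, η α m = η β m := fun m hm => (htree α hα β hβ n n heq).2 m hm.le
  have hc : ∀ m < n, c α m = c β m := hcode α hα β hβ n (hcompat n le_rfl heq)
  have hunifα : UniformizesFrom f (η α) (c α) (fs α) := hunif α hα
  have hunifβ : UniformizesFrom f (η β) (c β) (fs β) := hunif β hβ
  obtain ⟨hαn, hβn⟩ := max_le_iff.mp hn
  apply le_antisymm
  · exact hmin α hα _ <| hunifβ.of_eq_below (hunifα.mono hαn) (fun m hm => (hη m hm).symm)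
      (fun m hm => (hc m hm).symm)
  · exact hmin β hβ _ <| hunifα.of_eq_below (hunifβ.mono hβn) hη hc

/-- If `f` uniformizes a (suitably injectively coded) coloring `c` of a tree-like ladder
system `η` with minimal `f*`, and `η_α(n) = η_β(n)` for some `n ≥ max(f*(α), f*(β))`,
where the colorings are compatible above `n` and `c_α(n) = c_β(n)` determines
`c_α ↾ n = c_β ↾ n`, then `f*(α) = f*(β)`. -/
theorem stmt11 (S : Set Ordinal) (η : Ordinal → ℕ → Ordinal)
    (hladder : ∀ α ∈ S, IsLadderAt α (η α))
    (htree : TreeLike S η)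
    (c : Ordinal → ℕ → ℕ) (f : Ordinal → ℕ) (fs : Ordinal → ℕ)
    (hunif : ∀ α ∈ S, ∀ n, fs α ≤ n → f (η α n) = c α n)
    (hmin : ∀ α ∈ S, ∀ k, (∀ n, k ≤ n → f (η α n) = c α n) → fs α ≤ k)
    (α β : Ordinal) (hα : α ∈ S) (hβ : β ∈ S)
    (n : ℕ) (hn : max (fs α) (fs β) ≤ n) (heq : η α n = η β n)
    (hcompat : ∀ m, n ≤ m → η α m = η β m → c α m = c β m)
    (hcode : ∀ γ ∈ S, ∀ γ' ∈ S, ∀ j, c γ j = c γ' j → ∀ i < j, c γ i = c γ' i) :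
    fs α = fs β :=
  stmt11_general S η htree c f fs hunif hmin α β hα hβ n hn heq hcompat hcode
end

section
/- Suppose E ⊆ [ω, ω₁) and η is a ladder system on E whose ladders consist of isolated points (points not in E) and which satisfies 2-uniformization. Then the topological space X(η) is normal. -/
open Ordinal Set

/-- The ladder-system topology `X(η)` on `ω₁`: points outside `E` are isolated, and a set
`U` is open iff for every `α ∈ U ∩ E` it contains a tail of the ladder at `α`. -/
def ladderTop (E : Set O1) (η : O1 → ℕ → O1) : TopologicalSpace O1 where
  IsOpen U := ∀ α ∈ U, α ∈ E → ∃ n : ℕ, ∀ m, n ≤ m → η α m ∈ U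
  isOpen_univ := fun _ _ _ => ⟨0, fun _ _ => Set.mem_univ _⟩
  isOpen_inter := by
    intro U V hU hV α hα hαE
    obtain ⟨n, hn⟩ := hU α hα.1 hαE
    obtain ⟨k, hk⟩ := hV α hα.2 hαE
    exact ⟨max n k, fun m hm =>
      ⟨hn m (le_trans (le_max_left _ _) hm), hk m (le_trans (le_max_right _ _) hm)⟩⟩
  isOpen_sUnion := by
    intro s hs α hα hαE
    obtain ⟨U, hUs, hαU⟩ := hα
    obtain ⟨n, hn⟩ := hs U hUs α hαU hαE
    exact ⟨n, fun m hm => ⟨U, hUs, hn m hm⟩⟩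

open Filter Topology

/-!
Color the ladder at `α ∈ E` by `0` if `α ∈ H` and by `1` otherwise, and uniformize this coloring
by `f`. For disjoint closed `H` and `K`, the sets `H ∪ {β ∉ E ∪ K | f β = 0}` and
`K ∪ {β ∉ E ∪ H | f β ≠ 0}` are then disjoint open neighbourhoods: a point of `H ∩ E` is not
in the closed set `K`, so a tail of its ladder avoids `K`, is colored `0` by `f`, and consists
of isolated points.
-/

section LadderTop

variable {E : Set O1} {η : O1 → ℕ → O1}

theorem ladderTop_isOpen_iff {U : Set O1} :
    IsOpen[ladderTop E η] U ↔ ∀ α ∈ U, α ∈ E → ∀ᶠ m in atTop, η α m ∈ U := by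
  simp only [eventually_atTop]
  rfl

theorem ladderTop_eventually_notMem_of_isClosed {K : Set O1} (hK : IsClosed[ladderTop E η] K)
    {α : O1} (hαK : α ∉ K) (hαE : α ∈ E) : ∀ᶠ m in atTop, η α m ∉ K :=
  ladderTop_isOpen_iff.mp hK.isOpen_compl α hαK hαE

theorem ladderTop_isOpen_union_isolated (hiso : ∀ α ∈ E, ∀ n, η α n ∉ E) {H K : Set O1}
    (hK : IsClosed[ladderTop E η] K) (hHK : Disjoint H K) (p : ℕ → Prop) (f : O1 → ℕ)
    (hf : ∀ α ∈ H, α ∈ E → ∀ᶠ m in atTop, p (f (η α m))) :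
    IsOpen[ladderTop E η] (H ∪ {β | β ∉ E ∧ β ∉ K ∧ p (f β)}) := by
  refine ladderTop_isOpen_iff.mpr ?_
  rintro α (hαH | ⟨hαE', -⟩) hαE
  · have hαK : α ∉ K := disjoint_left.mp hHK hαH
    filter_upwards [ladderTop_eventually_notMem_of_isClosed hK hαK hαE, hf α hαH hαE]
      with m hmK hmp
    exact Or.inr ⟨hiso α hαE m, hmK, hmp⟩
  · exact absurd hαE hαE'

end LadderTop

theorem stmt18_general (E : Set O1) (η : O1 → ℕ → O1)
    (hiso : ∀ α ∈ E, ∀ n, η α n ∉ E)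
    (hunif : ∀ c : O1 → ℕ → ℕ, (∀ α ∈ E, ∀ n, c α n < 2) →
      ∃ (f : O1 → ℕ) (fs : O1 → ℕ), ∀ α ∈ E, ∀ n, fs α ≤ n → f (η α n) = c α n) :
    @NormalSpace O1 (ladderTop E η) := by
  classical
  let := ladderTop E η
  refine ⟨fun H K hH hK hHK => ?_⟩
  obtain ⟨f, fs, hf⟩ := hunif (fun α _ => if α ∈ H then 0 else 1)
    (fun α _ n => by split <;> omega)
  have hf_tail : ∀ α ∈ E, ∀ᶠ m in atTop, f (η α m) = if α ∈ H then 0 else 1 :=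
    fun α hαE => eventually_atTop.mpr ⟨fs α, hf α hαE⟩
  have hH_tail : ∀ α ∈ H, α ∈ E → ∀ᶠ m in atTop, f (η α m) = 0 := fun α hαH hαE => by
    simpa [hαH] using hf_tail α hαE
  have hK_tail : ∀ α ∈ K, α ∈ E → ∀ᶠ m in atTop, f (η α m) ≠ 0 := fun α hαK hαE =>
    (hf_tail α hαE).mono fun m hm => by simp [hm, disjoint_right.mp hHK hαK]
  refine ⟨_, _, ladderTop_isOpen_union_isolated hiso hK hHK (· = 0) f hH_tail,
    ladderTop_isOpen_union_isolated hiso hH hHK.symm (· ≠ 0) f hK_tail,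
    subset_union_left, subset_union_left, ?_⟩
  rw [disjoint_left]
  rintro x (hxH | ⟨-, hxK, hf0⟩) (hxK' | ⟨-, hxH', hf1⟩)
  exacts [disjoint_left.mp hHK hxH hxK', hxH' hxH, hxK hxK', hf1 hf0]

/-- If `E ⊆ [ω, ω₁)` and `η` is a ladder system on `E` whose ladders consist of points
not in `E` (hence isolated), and `η` satisfies `2`-uniformization, then the space `X(η)`
is normal. -/
theorem stmt18 (E : Set O1) (η : O1 → ℕ → O1)
    (hE : ∀ α ∈ E, Ordinal.omega0 ≤ (α : Ordinal))
    (hladder : ∀ α ∈ E, IsLadderAt (α : Ordinal) (fun n => ((η α n : O1) : Ordinal)))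
    (hiso : ∀ α ∈ E, ∀ n, η α n ∉ E)
    (hdisj : ∀ α ∈ E, ∀ β ∈ E,
      (∃ (δ : Ordinal) (n m : ℕ), Order.IsSuccLimit δ ∧ (α : Ordinal) = δ + n ∧
        (β : Ordinal) = δ + m ∧ n ≠ m) →
      Disjoint (Set.range (η α)) (Set.range (η β)))
    (hunif : ∀ c : O1 → ℕ → ℕ, (∀ α ∈ E, ∀ n, c α n < 2) →
      ∃ (f : O1 → ℕ) (fs : O1 → ℕ), ∀ α ∈ E, ∀ n, fs α ≤ n → f (η α n) = c α n) :
    @NormalSpace O1 (ladderTop E η) :=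
  stmt18_general E η hiso hunif
end
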